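/- Let k > n ≥ 1. For every deterministic adaptive strategy s of the codebreaker — i.e., every function s mapping each finite list of previous answers (natural numbers) to a next query in [n] → [k], with queries allowed to repeat colors — there exists an injective secret code y : [n] → [k] such that in the play against y (where the t-th query is q_t := s(a_1, …, a_{t−1}) and the t-th answer is a_t := black(q_t, y)), none of the first k − 1 queries q_1, …, q_{k−1} equals y. Hence the codebreaker needs at least k queries in the worst case to guess a secret repetition-free code with n positions and k colors. -/
import Mathlib


/-- `black w x` is the number of positions where the codes `w` and `x` coincide. -/
def black {n k : ℕ} (w x : Fin n → Fin k) : ℕ :=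
  (Finset.univ.filter fun i => w i = x i).card

/-- `hist s y t` is the list of answers `[a_1, …, a_t]` produced in the play of the
adaptive strategy `s` against the secret code `y`: the `(t+1)`-st query is
`q_{t+1} = s (hist s y t)` and its answer is `a_{t+1} = black q_{t+1} y`. -/
def hist {n k : ℕ} (s : List ℕ → Fin n → Fin k) (y : Fin n → Fin k) : ℕ → List ℕ
  | 0 => []
  | t + 1 => hist s y t ++ [black (s (hist s y t)) y]

namespace Stmt13Aux

variable {n k : ℕ}

def IsComp (P : Finset (Fin n)) (A : Fin n → Finset (Fin k)) (p : Fin n → Fin k)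
    (y : Fin n → Fin k) : Prop :=
  Function.Injective y ∧ (∀ i, i ∉ P → y i = p i) ∧ (∀ i ∈ P, y i ∈ A i)

inductive Pulled (P : Finset (Fin n)) (A : Fin n → Finset (Fin k)) (q y : Fin n → Fin k) :
    Fin n → Prop
  | base (i : Fin n) (hi : i ∈ P) (h : y i = q i) : Pulled P A q y i
  | step (j v : Fin n) (hj : Pulled P A q y j) (hv : v ∈ P) (h1 : y j ∈ A v)
      (h2 : y j ≠ q v) : Pulled P A q y v

def Dt (P : Finset (Fin n)) (A : Fin n → Finset (Fin k)) (q y : Fin n → Fin k) :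
    ℕ → Finset (Fin n)
  | 0 => P.filter fun i => y i = q i
  | t + 1 => Dt P A q y t ∪ P.filter fun v => ∃ j ∈ Dt P A q y t, y j ∈ A v ∧ y j ≠ q v

lemma Dt_subset (P : Finset (Fin n)) (A : Fin n → Finset (Fin k)) (q y : Fin n → Fin k) :
    ∀ t, Dt P A q y t ⊆ P
  | 0 => Finset.filter_subset _ _
  | t + 1 => by
      show Dt P A q y t ∪ _ ⊆ P
      exact Finset.union_subset (Dt_subset P A q y t) (Finset.filter_subset _ _)

lemma pulled_mem_Dt {P : Finset (Fin n)} {A : Fin n → Finset (Fin k)} {q y : Fin n → Fin k}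
    {v : Fin n} (h : Pulled P A q y v) : ∃ t, v ∈ Dt P A q y t := by
  induction h with
  | base i hi h => exact ⟨0, by simp [Dt, hi, h]⟩
  | step j v hj hv h1 h2 ih =>
      obtain ⟨t, ht⟩ := ih
      refine ⟨t + 1, ?_⟩
      show v ∈ Dt P A q y t ∪ _
      exact Finset.mem_union_right _ (by
        simp only [Finset.mem_filter]
        exact ⟨hv, j, ht, h1, h2⟩)

lemma pulled_root {P : Finset (Fin n)} (A : Fin n → Finset (Fin k)) {q y : Fin n → Fin k}
    {v : Fin n} (h : Pulled P A q y v) : ∃ r ∈ P, y r = q r := by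
  induction h with
  | base i hi h => exact ⟨i, hi, h⟩
  | step j v hj hv h1 h2 ih => exact ih

lemma key (P : Finset (Fin n)) (A : Fin n → Finset (Fin k)) (p q : Fin n → Fin k)
    (hP : P.Nonempty) (h2 : ∀ i ∈ P, 2 ≤ (A i).card)
    (hI2 : ∀ i ∈ P, ∀ x, x ∉ P → p x ∉ A i)
    (hC : ∃ y, IsComp P A p y) :
    ∃ (y₀ : Fin n → Fin k) (D : Finset (Fin n)),
      IsComp P A p y₀ ∧ D ⊆ P ∧ (P \ D).Nonempty ∧
      (∀ v ∈ P \ D, y₀ v ≠ q v) ∧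
      (∀ j ∈ D, ∀ v ∈ P \ D, y₀ j ∈ A v → y₀ j = q v) := by
  classical
  set V : Finset (Fin n → Fin k) := Finset.univ.filter (fun y => IsComp P A p y) with hV
  have hVne : V.Nonempty := by
    obtain ⟨y, hy⟩ := hC
    exact ⟨y, by simp [hV, hy]⟩
  obtain ⟨y, hyV, hymin⟩ :=
    V.exists_min_image (fun z => (P.filter fun i => z i = q i).card) hVne
  have hy : IsComp P A p y := by
    have := hyV; rw [hV, Finset.mem_filter] at this; exact this.2
  suffices hmain : ∃ v ∈ P, ¬ Pulled P A q y v by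
    obtain ⟨v, hvP, hvnp⟩ := hmain
    refine ⟨y, P.filter (fun i => Pulled P A q y i), hy, Finset.filter_subset _ _,
      ⟨v, ?_⟩, ?_, ?_⟩
    · rw [Finset.mem_sdiff, Finset.mem_filter]
      exact ⟨hvP, fun h => hvnp h.2⟩
    · intro w hw
      rw [Finset.mem_sdiff, Finset.mem_filter] at hw
      intro hq
      exact hw.2 ⟨hw.1, Pulled.base w hw.1 hq⟩
    · intro j hj w hw hA'
      rw [Finset.mem_filter] at hj
      rw [Finset.mem_sdiff, Finset.mem_filter] at hw
      by_contra hne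
      exact hw.2 ⟨hw.1, Pulled.step j w hj.2 hw.1 hA' hne⟩
  by_contra hall
  push_neg at hall
  -- hall : ∀ v ∈ P, Pulled P A q y v
  by_cases hcaseA : ∃ r ∈ P, y r = q r ∧ ∃ d ∈ A r, d ≠ q r ∧ ∀ w, y w ≠ d
  · -- swap to an unused color
    obtain ⟨r, hrP, hr, d, hdA, hdq, hdfresh⟩ := hcaseA
    have hval : ∀ x, x ≠ r → Function.update y r d x = y x :=
      fun x hx => Function.update_of_ne hx d y
    have hvr : Function.update y r d r = d := Function.update_self r d y
    have hinj' : Function.Injective (Function.update y r d) := by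
      intro u v huv
      by_cases hu : u = r <;> by_cases hv : v = r
      · rw [hu, hv]
      · exfalso
        rw [hu, hvr, hval v hv] at huv
        exact hdfresh v huv.symm
      · exfalso
        rw [hv, hvr, hval u hu] at huv
        exact hdfresh u huv
      · rw [hval u hu, hval v hv] at huv
        exact hy.1 huv
    have hcomp' : IsComp P A p (Function.update y r d) := by
      refine ⟨hinj', ?_, ?_⟩
      · intro x hx
        have hxr : x ≠ r := fun h => hx (h ▸ hrP)
        rw [hval x hxr]; exact hy.2.1 x hx
      · intro i hi
        rcases eq_or_ne i r with rfl | hir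
        · rw [hvr]; exact hdA
        · rw [hval i hir]; exact hy.2.2 i hi
    have hsub : P.filter (fun i => Function.update y r d i = q i) ⊆
        P.filter (fun i => y i = q i) := by
      intro i hi
      rw [Finset.mem_filter] at hi ⊢
      refine ⟨hi.1, ?_⟩
      rcases eq_or_ne i r with rfl | hir
      · exact absurd (hvr ▸ hi.2) hdq
      · rw [← hval i hir]; exact hi.2
    have hrs_mem : r ∈ P.filter (fun i => y i = q i) := Finset.mem_filter.2 ⟨hrP, hr⟩
    have hrs_not : r ∉ P.filter (fun i => Function.update y r d i = q i) := by
      rw [Finset.mem_filter]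
      rintro ⟨-, habs⟩
      exact hdq (hvr ▸ habs)
    have hlt2 : (P.filter (fun i => Function.update y r d i = q i)).card <
        (P.filter (fun i => y i = q i)).card :=
      Finset.card_lt_card ((Finset.ssubset_iff_of_subset hsub).2 ⟨r, hrs_mem, hrs_not⟩)
    have := hymin (Function.update y r d)
      (by rw [hV, Finset.mem_filter]; exact ⟨Finset.mem_univ _, hcomp'⟩)
    omega
  · push_neg at hcaseA
    -- hcaseA : ∀ r ∈ P, y r = q r → ∀ d ∈ A r, d ≠ q r → ∃ w, y w = d
    have hex : ∀ u ∈ P, ∃ t, u ∈ Dt P A q y t := fun u hu => pulled_mem_Dt (hall u hu)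
    set rk : Fin n → ℕ := fun u => if h : ∃ t, u ∈ Dt P A q y t then Nat.find h else 0 with hrk
    have hrkspec : ∀ u ∈ P, u ∈ Dt P A q y (rk u) ∧ ∀ t, u ∈ Dt P A q y t → rk u ≤ t := by
      intro u hu
      have h0 := hex u hu
      rw [hrk]
      simp only [dif_pos h0]
      exact ⟨Nat.find_spec h0, fun t ht => Nat.find_min' h0 ht⟩
    have hstep : ∀ u, ∃ w, u ∈ P →
        (w ∈ P ∧ y w ∈ A u ∧ y w ≠ q u ∧ (y u ≠ q u → rk w < rk u)) := by
      intro u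
      by_cases hu : u ∈ P
      · by_cases hroot : y u = q u
        · have h2u := h2 u hu
          have hle := Finset.pred_card_le_card_erase (s := A u) (a := q u)
          have hpos : 0 < ((A u).erase (q u)).card := by omega
          obtain ⟨d, hd⟩ := Finset.card_pos.1 hpos
          have hdq : d ≠ q u := Finset.ne_of_mem_erase hd
          have hdA : d ∈ A u := Finset.mem_of_mem_erase hd
          obtain ⟨w, hw⟩ := hcaseA u hu hroot d hdA hdq
          have hwP : w ∈ P := by
            by_contra hwP
            have hyw := hy.2.1 w hwP
            rw [hyw] at hw
            exact hI2 u hu w hwP (hw ▸ hdA)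
          exact ⟨w, fun _ => ⟨hwP, by rw [hw]; exact hdA, by rw [hw]; exact hdq,
            fun habs => absurd hroot habs⟩⟩
        · have hspec := hrkspec u hu
          rcases hru : rk u with _ | t'
          · exfalso
            have := hspec.1
            rw [hru] at this
            simp only [Dt, Finset.mem_filter] at this
            exact hroot this.2
          · have hu_t : u ∈ Dt P A q y (t' + 1) := by rw [← hru]; exact hspec.1
            have hnot : u ∉ Dt P A q y t' := by
              intro hmem
              have := hspec.2 t' hmem
              omega
            have hu_t' : u ∈ Dt P A q y t' ∪ P.filter
                (fun v => ∃ j ∈ Dt P A q y t', y j ∈ A v ∧ y j ≠ q v) := hu_t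
            rcases Finset.mem_union.1 hu_t' with h | h
            · exact absurd h hnot
            · rw [Finset.mem_filter] at h
              obtain ⟨j, hjDt, hjA, hjq⟩ := h.2
              refine ⟨j, fun _ => ⟨Dt_subset P A q y t' hjDt, hjA, hjq, fun _ => ?_⟩⟩
              have hjP : j ∈ P := Dt_subset P A q y t' hjDt
              have := (hrkspec j hjP).2 t' hjDt
              omega
      · exact ⟨u, fun h => absurd h hu⟩
    choose f hf using hstep
    obtain ⟨v₁, hv₁⟩ := hP
    obtain ⟨r₀, hr₀P, hr₀⟩ := pulled_root A (hall v₁ hv₁)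
    set g : ℕ → Fin n := fun t => f^[t] r₀ with hg
    have hgsucc : ∀ t, g (t + 1) = f (g t) := by
      intro t
      rw [hg]
      exact Function.iterate_succ_apply' f t r₀
    have hgP : ∀ t, g t ∈ P := by
      intro t
      induction t with
      | zero => exact hr₀P
      | succ t ih =>
          rw [hgsucc]
          exact (hf (g t) ih).1
    have hcard : (Finset.univ : Finset (Fin n)).card < (Finset.range (n + 1)).card := by
      simp
    obtain ⟨a, -, b, -, hab, hgab0⟩ :=
      Finset.exists_ne_map_eq_of_card_lt_of_maps_to hcard (fun t _ => Finset.mem_univ (g t))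
    have hab' : ∃ a b : ℕ, a < b ∧ g a = g b := by
      rcases lt_or_gt_of_ne hab with h | h
      · exact ⟨a, b, h, hgab0⟩
      · exact ⟨b, a, h, hgab0.symm⟩
    clear hab hgab0
    obtain ⟨a, b, hlt, hgab⟩ := hab'
    set O : Finset (Fin n) := (Finset.range (b - a)).image (fun t => g (a + t)) with hO
    have hOne : O.Nonempty := by
      refine ⟨g a, ?_⟩
      rw [hO]
      exact Finset.mem_image.2 ⟨0, Finset.mem_range.2 (by omega), by simp⟩
    have hOP : ∀ u ∈ O, u ∈ P := by
      intro u hu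
      rw [hO] at hu
      obtain ⟨t, -, rfl⟩ := Finset.mem_image.1 hu
      exact hgP _
    have hfO : ∀ u ∈ O, f u ∈ O := by
      intro u hu
      rw [hO] at hu ⊢
      obtain ⟨t, htm, rfl⟩ := Finset.mem_image.1 hu
      rw [Finset.mem_range] at htm
      have hstep1 : f (g (a + t)) = g (a + t + 1) := (hgsucc (a + t)).symm
      rcases eq_or_lt_of_le (Nat.succ_le_of_lt htm) with he | hl
      · refine Finset.mem_image.2 ⟨0, Finset.mem_range.2 (by omega), ?_⟩
        rw [hstep1]
        have he2 : a + t + 1 = b := by omega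
        rw [he2, ← hgab]
        simp
      · refine Finset.mem_image.2 ⟨t + 1, Finset.mem_range.2 hl, ?_⟩
        rw [hstep1]
        congr 1
    have hsurj : ∀ u ∈ O, ∃ w ∈ O, f w = u := by
      intro u hu
      rw [hO] at hu
      obtain ⟨t, htm, rfl⟩ := Finset.mem_image.1 hu
      rw [Finset.mem_range] at htm
      rcases Nat.eq_zero_or_pos t with rfl | hpos
      · refine ⟨g (a + (b - 1 - a)), ?_, ?_⟩
        · rw [hO]
          exact Finset.mem_image.2 ⟨b - 1 - a, Finset.mem_range.2 (by omega), rfl⟩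
        · have h1 : a + (b - 1 - a) = b - 1 := by omega
          rw [h1]
          have h2 : f (g (b - 1)) = g (b - 1 + 1) := (hgsucc (b - 1)).symm
          rw [h2]
          have h3 : b - 1 + 1 = b := by omega
          rw [h3, ← hgab]
          congr 1
      · refine ⟨g (a + (t - 1)), ?_, ?_⟩
        · rw [hO]
          exact Finset.mem_image.2 ⟨t - 1, Finset.mem_range.2 (by omega), rfl⟩
        · rw [(hgsucc (a + (t - 1))).symm]
          congr 1
          omega
    have himg : O.image f = O := by
      apply Finset.Subset.antisymm
      · intro u hu
        obtain ⟨w, hw, rfl⟩ := Finset.mem_image.1 hu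
        exact hfO w hw
      · intro u hu
        obtain ⟨w, hw, hwu⟩ := hsurj u hu
        exact Finset.mem_image.2 ⟨w, hw, hwu⟩
    have hinjO : Set.InjOn f ↑O := Finset.card_image_iff.1 (by rw [himg])
    have hrootO : ∃ r ∈ O, y r = q r := by
      by_contra hnr
      push_neg at hnr
      have hlt' : ∀ u ∈ O, rk (f u) < rk u := fun u hu =>
        ((hf u (hOP u hu)).2.2.2) (hnr u hu)
      have e1 : ∑ u ∈ O, rk (f u) < ∑ u ∈ O, rk u :=
        Finset.sum_lt_sum_of_nonempty hOne hlt'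
      have e2 : ∑ v ∈ O.image f, rk v = ∑ u ∈ O, rk (f u) :=
        Finset.sum_image (fun x hx z hz hxz =>
          hinjO (Finset.mem_coe.2 hx) (Finset.mem_coe.2 hz) hxz)
      rw [himg] at e2
      omega
    obtain ⟨rs, hrsO, hrs⟩ := hrootO
    have hinjh : Function.Injective (fun x => if x ∈ O then f x else x) := by
      intro u v huv
      simp only at huv
      by_cases hu : u ∈ O <;> by_cases hv : v ∈ O
      · rw [if_pos hu, if_pos hv] at huv
        exact hinjO (Finset.mem_coe.2 hu) (Finset.mem_coe.2 hv) huv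
      · rw [if_pos hu, if_neg hv] at huv
        exact absurd (by rw [← huv]; exact hfO u hu) hv
      · rw [if_neg hu, if_pos hv] at huv
        exact absurd (by rw [huv]; exact hfO v hv) hu
      · rw [if_neg hu, if_neg hv] at huv
        exact huv
    have hinj' : Function.Injective (fun x => if x ∈ O then y (f x) else y x) := by
      have : (fun x => if x ∈ O then y (f x) else y x)
          = fun x => y ((fun z => if z ∈ O then f z else z) x) := by
        funext x
        by_cases hx : x ∈ O <;> simp [hx]
      rw [this]
      exact hy.1.comp hinjh
    have hcomp' : IsComp P A p (fun x => if x ∈ O then y (f x) else y x) := by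
      refine ⟨hinj', ?_, ?_⟩
      · intro x hx
        have hxO : x ∉ O := fun hxO => hx (hOP x hxO)
        show (if x ∈ O then y (f x) else y x) = p x
        rw [if_neg hxO]
        exact hy.2.1 x hx
      · intro i hi
        show (if i ∈ O then y (f i) else y i) ∈ A i
        by_cases hiO : i ∈ O
        · rw [if_pos hiO]
          exact (hf i (hOP i hiO)).2.1
        · rw [if_neg hiO]
          exact hy.2.2 i hi
    have hsub : P.filter (fun i => (if i ∈ O then y (f i) else y i) = q i) ⊆
        P.filter (fun i => y i = q i) := by
      intro i hi
      rw [Finset.mem_filter] at hi ⊢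
      refine ⟨hi.1, ?_⟩
      by_cases hiO : i ∈ O
      · exfalso
        have h1 := (hf i (hOP i hiO)).2.2.1
        have h2 := hi.2
        rw [if_pos hiO] at h2
        exact h1 h2
      · have h2 := hi.2
        rw [if_neg hiO] at h2
        exact h2
    have hrs_mem : rs ∈ P.filter (fun i => y i = q i) :=
      Finset.mem_filter.2 ⟨hOP rs hrsO, hrs⟩
    have hrs_not : rs ∉ P.filter (fun i => (if i ∈ O then y (f i) else y i) = q i) := by
      rw [Finset.mem_filter]
      rintro ⟨-, habs⟩
      rw [if_pos hrsO] at habs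
      exact (hf rs (hOP rs hrsO)).2.2.1 habs
    have hlt2 : (P.filter (fun i => (if i ∈ O then y (f i) else y i) = q i)).card <
        (P.filter (fun i => y i = q i)).card :=
      Finset.card_lt_card ((Finset.ssubset_iff_of_subset hsub).2 ⟨rs, hrs_mem, hrs_not⟩)
    have hfin := hymin (fun x => if x ∈ O then y (f x) else y x)
      (by rw [hV, Finset.mem_filter]; exact ⟨Finset.mem_univ _, hcomp'⟩)
    omega

lemma hist_shift (σ : List ℕ → Fin n → Fin k) (y : Fin n → Fin k) (a : ℕ)
    (h : black (σ []) y = a) :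
    ∀ t, hist σ y (t + 1) = a :: hist (fun l => σ (a :: l)) y t := by
  intro t
  induction t with
  | zero =>
      show hist σ y 0 ++ [black (σ (hist σ y 0)) y] = _
      simp [hist, h]
  | succ t ih =>
      show hist σ y (t + 1) ++ [black (σ (hist σ y (t + 1))) y] = _
      rw [ih]
      show _ = a :: (hist (fun l => σ (a :: l)) y t ++
        [black ((fun l => σ (a :: l)) (hist (fun l => σ (a :: l)) y t)) y])
      simp

lemma main :
    ∀ (d : ℕ) (P : Finset (Fin n)) (A : Fin n → Finset (Fin k)) (p : Fin n → Fin k),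
      P.Nonempty →
      (∀ i ∈ P, d + 1 ≤ (A i).card) →
      (∀ i ∈ P, ∀ x, x ∉ P → p x ∉ A i) →
      (∃ y, IsComp P A p y) →
      ∀ σ : List ℕ → Fin n → Fin k,
        ∃ y, IsComp P A p y ∧ ∀ t < d, σ (hist σ y t) ≠ y := by
  intro d
  induction d with
  | zero =>
      intro P A p hP hA hI2 hC σ
      obtain ⟨y, hy⟩ := hC
      exact ⟨y, hy, fun t ht => absurd ht (Nat.not_lt_zero t)⟩
  | succ d ih =>
      intro P A p hP hA hI2 hC σ
      classical
      obtain ⟨y₀, D, hy₀, hDP, hPDne, hVq, hclo⟩ := key P A p (σ []) hP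
        (fun i hi => le_trans (by omega) (hA i hi)) hI2 hC
      set q : Fin n → Fin k := σ [] with hqdef
      set P' : Finset (Fin n) := P \ D with hP'def
      set A' : Fin n → Finset (Fin k) := fun v => ((A v).erase (q v)) \ (D.image y₀) with hA'def
      set p' : Fin n → Fin k := fun i => if i ∈ P then y₀ i else p i with hp'def
      have hA'sub : ∀ v, A' v ⊆ A v := by
        intro v c hc
        rw [hA'def] at hc
        simp only [Finset.mem_sdiff, Finset.mem_erase] at hc
        exact hc.1.2
      have hA'erase : ∀ v ∈ P', A' v = (A v).erase (q v) := by
        intro v hv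
        rw [hA'def]
        apply Finset.sdiff_eq_self_iff_disjoint.2
        rw [Finset.disjoint_left]
        intro c hc hcim
        obtain ⟨j, hjD, rfl⟩ := Finset.mem_image.1 hcim
        rw [Finset.mem_erase] at hc
        exact hc.1 (hclo j hjD v hv hc.2)
      have hA'card : ∀ v ∈ P', d + 1 ≤ (A' v).card := by
        intro v hv
        rw [hA'erase v hv]
        have h1 := hA v (Finset.mem_sdiff.1 hv).1
        have h2 := Finset.pred_card_le_card_erase (s := A v) (a := q v)
        omega
      have hI2' : ∀ v ∈ P', ∀ x, x ∉ P' → p' x ∉ A' v := by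
        intro v hv x hx
        by_cases hxP : x ∈ P
        · have hxD : x ∈ D := by
            rw [hP'def, Finset.mem_sdiff] at hx
            by_contra hxD
            exact hx ⟨hxP, hxD⟩
          have : p' x = y₀ x := by rw [hp'def]; simp [hxP]
          rw [this, hA'def]
          simp only [Finset.mem_sdiff]
          rintro ⟨-, habs⟩
          exact habs (Finset.mem_image.2 ⟨x, hxD, rfl⟩)
        · have : p' x = p x := by rw [hp'def]; simp [hxP]
          rw [this]
          intro habs
          exact hI2 v (Finset.mem_sdiff.1 hv).1 x hxP (hA'sub v habs)
      have hC' : ∃ y, IsComp P' A' p' y := by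
        refine ⟨y₀, hy₀.1, ?_, ?_⟩
        · intro i hi
          by_cases hiP : i ∈ P
          · rw [hp'def]; simp [hiP]
          · rw [hp'def]; simp only [hiP, if_false]
            exact hy₀.2.1 i hiP
        · intro v hv
          rw [hA'def]
          simp only [Finset.mem_sdiff, Finset.mem_erase]
          refine ⟨⟨hVq v hv, hy₀.2.2 v (Finset.mem_sdiff.1 hv).1⟩, ?_⟩
          intro habs
          obtain ⟨j, hjD, hj⟩ := Finset.mem_image.1 habs
          have : j = v := hy₀.1 hj
          rw [this] at hjD
          exact (Finset.mem_sdiff.1 hv).2 hjD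
      have hmono : ∀ y, IsComp P' A' p' y → IsComp P A p y := by
        intro y hy
        refine ⟨hy.1, ?_, ?_⟩
        · intro i hiP
          have hi' : i ∉ P' := by
            rw [hP'def, Finset.mem_sdiff]
            exact fun h => hiP h.1
          have := hy.2.1 i hi'
          rw [this, hp'def]
          simp [hiP]
        · intro i hiP
          by_cases hi' : i ∈ P'
          · exact hA'sub i (hy.2.2 i hi')
          · have hiD : i ∈ D := by
              rw [hP'def, Finset.mem_sdiff] at hi'
              by_contra hiD
              exact hi' ⟨hiP, hiD⟩
            have := hy.2.1 i (by rw [hP'def, Finset.mem_sdiff]; exact fun h => h.2 hiD)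
            rw [this, hp'def]
            simp only [hiP, if_true]
            exact hy₀.2.2 i hiP
      set aN : ℕ := (Finset.univ.filter fun i => q i = p' i ∧ i ∉ P').card with haN
      have hANS : ∀ y, IsComp P' A' p' y → black q y = aN := by
        intro y hy
        rw [haN]
        show (Finset.univ.filter fun i => q i = y i).card = _
        congr 1
        apply Finset.filter_congr
        intro i _
        by_cases hi : i ∈ P'
        · simp only [hi, not_true, and_false, iff_false]
          intro habs
          have h1 := hy.2.2 i hi
          rw [hA'erase i hi, ← habs] at h1
          exact (Finset.mem_erase.1 h1).1 rfl
        · rw [hy.2.1 i hi]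
          simp [hi]
      obtain ⟨y, hy, hd⟩ := ih P' A' p' hPDne hA'card hI2' hC' (fun l => σ (aN :: l))
      refine ⟨y, hmono y hy, ?_⟩
      intro t ht
      match t with
      | 0 =>
          show σ (hist σ y 0) ≠ y
          have : hist σ y 0 = [] := rfl
          rw [this, ← hqdef]
          intro he
          obtain ⟨v, hv⟩ := hPDne
          have h1 := hy.2.2 v hv
          rw [hA'erase v hv, ← he] at h1
          exact (Finset.mem_erase.1 h1).1 rfl
      | t' + 1 =>
          have hq : black (σ []) y = aN := hANS y hy
          rw [hist_shift σ y aN hq t']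
          exact hd t' (by omega)

end Stmt13Aux

theorem stmt13 (n k : ℕ) (hn : 1 ≤ n) (hk : n < k) (s : List ℕ → Fin n → Fin k) :
    ∃ y : Fin n → Fin k, Function.Injective y ∧ ∀ t < k - 1, s (hist s y t) ≠ y := by
  have hk0 : 0 < k := by omega
  have hc : ∃ y : Fin n → Fin k,
      Stmt13Aux.IsComp Finset.univ (fun _ => Finset.univ) (fun _ => ⟨0, hk0⟩) y := by
    refine ⟨fun i => Fin.castLE (le_of_lt hk) i, ?_, ?_, ?_⟩
    · intro a b hab
      exact Fin.ext (by simpa using congrArg Fin.val hab)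
    · intro i hi
      exact absurd (Finset.mem_univ i) hi
    · intro i _
      exact Finset.mem_univ _
  obtain ⟨y, hy, hd⟩ := Stmt13Aux.main (k - 1) Finset.univ (fun _ => Finset.univ)
    (fun _ => ⟨0, hk0⟩) ⟨⟨0, by omega⟩, Finset.mem_univ _⟩
    (fun i _ => by simp; omega) (fun i _ x hx => absurd (Finset.mem_univ x) hx) hc s
  exact ⟨y, hy.1, hd⟩
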